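/- arXiv:1209.1971 — 3 statements merged into one kernel-verified Lean document; each statement's English description precedes it below -/
import Mathlib

section
/- Let n ≥ 1 and k ∈ ℕ, and let (A_{α₁…α_k}), with indices α_i ∈ {0, 1, …, n}, be a family of real numbers that is symmetric under all permutations of its k indices. If for all β₁, …, β_{k+2} ∈ {0, 1, …, n} the total symmetrization vanishes, i.e. Σ_{σ ∈ S_{k+2}} A_{β_{σ(1)}…β_{σ(k)}} η_{β_{σ(k+1)} β_{σ(k+2)}} = 0, then A_{α₁…α_k} = 0 for all indices. -/
/-!
Contract everything against `x ⊗ ⋯ ⊗ x`: the tensor `A` becomes the polynomial `P(x) = A(x, …, x)`,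
the metric becomes the quadratic form `Q(x) = η(x, x)`, and the total symmetrization of `A ⊗ η`
becomes `(k+2)! · P Q`. The hypothesis thus says `P Q = 0` in `ℝ[x₀, …, xₙ]`, so `P = 0` because
`Q ≠ 0`. A symmetric tensor is recovered from its polynomial: the coefficient of `x^α` in `P` is
`A_α` times the number of rearrangements of `α`.
-/

/-- The Minkowski metric η on ℝ^{n+1}: η_{μν} is −1 if μ = ν = 0, 1 if μ = ν ≥ 1, else 0. -/
noncomputable def etaM (n : ℕ) (μ ν : Fin (n + 1)) : ℝ :=
  if μ = ν then (if μ = 0 then -1 else 1) else 0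

open MvPolynomial Finset

section TensorForm

variable {ι V R : Type*} [Fintype ι] [DecidableEq ι] [Fintype V] [CommSemiring R]

noncomputable def tensorForm (T : (ι → V) → R) : MvPolynomial V R :=
  ∑ β, C (T β) * ∏ i, X (β i)

@[simp]
theorem tensorForm_zero : tensorForm (0 : (ι → V) → R) = 0 := by
  simp [tensorForm]

theorem tensorForm_comp_perm (T : (ι → V) → R) (σ : Equiv.Perm ι) :
    tensorForm (fun β ↦ T (β ∘ σ)) = tensorForm T := by
  refine Fintype.sum_equiv (σ.arrowCongr (Equiv.refl V)).symm _ _ fun β ↦ ?_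
  simp only [Equiv.arrowCongr_symm, Equiv.arrowCongr_apply, Equiv.symm_symm, Equiv.refl_symm,
    Equiv.coe_refl, Function.id_comp]
  rw [← Equiv.prod_comp σ fun i ↦ X (β i)]
  rfl

theorem tensorForm_symmetrize (T : (ι → V) → R) :
    tensorForm (fun β ↦ ∑ σ : Equiv.Perm ι, T (β ∘ σ)) =
      Fintype.card (Equiv.Perm ι) • tensorForm T := by
  have hσ := tensorForm_comp_perm T
  simp only [tensorForm] at hσ ⊢
  simp only [map_sum, Finset.sum_mul]
  rw [Finset.sum_comm]
  simp only [hσ, Finset.sum_const, Finset.card_univ]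

theorem tensorForm_append {k m : ℕ} (A : (Fin k → V) → R) (B : (Fin m → V) → R) :
    tensorForm (fun β : Fin (k + m) → V ↦ A (β ∘ Fin.castAdd m) * B (β ∘ Fin.natAdd k)) =
      tensorForm A * tensorForm B := by
  rw [tensorForm, ← (Fin.appendEquiv k m).sum_comp, Fintype.sum_prod_type, tensorForm, tensorForm,
    Finset.sum_mul_sum]
  refine Finset.sum_congr rfl fun α _ ↦ Finset.sum_congr rfl fun γ _ ↦ ?_
  simp only [Fin.appendEquiv_apply, Fin.prod_univ_add, Function.comp_def, Fin.append_left,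
    Fin.append_right, map_mul]
  ring

theorem coeff_tensorForm [DecidableEq V] (T : (ι → V) → R) (α : ι → V) :
    coeff (∑ i, Finsupp.single (α i) 1) (tensorForm T) =
      ∑ β with ∑ i, Finsupp.single (β i) 1 = ∑ i, Finsupp.single (α i) 1, T β := by
  rw [tensorForm, coeff_sum, Finset.sum_filter]
  refine Finset.sum_congr rfl fun β _ ↦ ?_
  simp only [X]
  rw [← monomial_sum_index, coeff_monomial]

omit [DecidableEq ι] [Fintype V] in
theorem exists_perm_comp_eq_of_sum_single_eq [DecidableEq V] {α β : ι → V}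
    (h : ∑ i, Finsupp.single (α i) 1 = ∑ i, Finsupp.single (β i) (1 : ℕ)) :
    ∃ σ : Equiv.Perm ι, α ∘ σ = β := by
  have hfiber (γ : ι → V) (v : V) :
      (∑ i, Finsupp.single (γ i) 1 : V →₀ ℕ) v = Fintype.card {i // γ i = v} := by
    simp [Finsupp.finsetSum_apply, Finsupp.single_apply, Fintype.card_subtype]
  have hcard (v : V) : Fintype.card {i // β i = v} = Fintype.card {i // α i = v} := by
    rw [← hfiber, ← hfiber, h]
  exact ⟨Equiv.ofFiberEquiv fun v ↦ Fintype.equivOfCardEq (hcard v),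
    funext (Equiv.ofFiberEquiv_map _)⟩

theorem eq_zero_of_tensorForm_eq_zero [IsAddTorsionFree R] {A : (ι → V) → R}
    (hA : ∀ (σ : Equiv.Perm ι) (α : ι → V), A (α ∘ σ) = A α) (h0 : tensorForm A = 0)
    (α : ι → V) : A α = 0 := by
  classical
  have hcoeff := coeff_tensorForm A α
  rw [h0, coeff_zero, Finset.sum_congr rfl fun β hβ ↦ ?_, Finset.sum_const] at hcoeff
  · refine (nsmul_eq_zero_iff_right ?_).mp hcoeff.symm
    exact Finset.card_ne_zero_of_mem (Finset.mem_filter.mpr ⟨Finset.mem_univ α, rfl⟩)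
  · obtain ⟨σ, rfl⟩ := exists_perm_comp_eq_of_sum_single_eq (Finset.mem_filter.mp hβ).2.symm
    exact hA σ α

end TensorForm

theorem tensorForm_etaM_ne_zero (n : ℕ) :
    tensorForm (fun β : Fin 2 → Fin (n + 1) ↦ etaM n (β 0) (β 1)) ≠ 0 := by
  intro h
  have h0 := congrArg (eval (Pi.single 0 1)) h
  rw [tensorForm, map_sum, map_zero, Fintype.sum_eq_single (fun _ ↦ 0)] at h0
  · simp [etaM] at h0
  · intro β hβ
    obtain ⟨i, hi⟩ : ∃ i, β i ≠ 0 := by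
      by_contra! hβ0
      exact hβ (funext hβ0)
    rw [map_mul, map_prod, Finset.prod_eq_zero (Finset.mem_univ i) (by simp [hi]), mul_zero]

/-- if a totally symmetric family `A_{α₁…α_k}` satisfies
`Σ_{σ ∈ S_{k+2}} A_{β_{σ(1)}…β_{σ(k)}} η_{β_{σ(k+1)} β_{σ(k+2)}} = 0` for all
indices `β₁,…,β_{k+2}`, then `A = 0`. -/
theorem symmetrization_eta_eq_zero (n k : ℕ)
    (A : (Fin k → Fin (n + 1)) → ℝ)
    (hsymm : ∀ (σ : Equiv.Perm (Fin k)) (α : Fin k → Fin (n + 1)), A (α ∘ σ) = A α)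
    (h : ∀ β : Fin (k + 2) → Fin (n + 1),
      ∑ σ : Equiv.Perm (Fin (k + 2)),
        A (fun i : Fin k => β (σ (Fin.castAdd 2 i))) *
          etaM n (β (σ ⟨k, by omega⟩)) (β (σ ⟨k + 1, by omega⟩)) = 0) :
    ∀ α : Fin k → Fin (n + 1), A α = 0 := by
  let η : (Fin 2 → Fin (n + 1)) → ℝ := fun β ↦ etaM n (β 0) (β 1)
  let F : (Fin (k + 2) → Fin (n + 1)) → ℝ := fun β ↦ A (β ∘ Fin.castAdd 2) * η (β ∘ Fin.natAdd k)
  have hF : tensorForm F = 0 := by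
    have hsum : (fun β ↦ ∑ σ : Equiv.Perm (Fin (k + 2)), F (β ∘ σ)) = 0 := funext h
    have := tensorForm_symmetrize F
    rwa [hsum, tensorForm_zero, eq_comm, nsmul_eq_zero_iff_right Fintype.card_ne_zero] at this
  rw [tensorForm_append] at hF
  exact eq_zero_of_tensorForm_eq_zero hsymm
    ((mul_eq_zero.mp hF).resolve_right (tensorForm_etaM_ne_zero n))
end

section
/- Let n ≥ 1, let k ∈ ℕ ∪ {∞}, and let f : ℝ^{n+1} → ℝ be C^k on a neighborhood of 0. Then there exist ε > 0 and a C^k function F defined on a neighborhood of 0 in ℝ^{n+1} such that for every ⃗y ∈ ℝ^n with 0 < |⃗y| < ε, F(|⃗y|, ⃗y) = |⃗y|^{−1} ∫₀^{|⃗y|} f(s, s⃗y/|⃗y|) ds. -/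
/-!
Along the generator through `⃗y`, the radial average is `∫₀¹ f(t • (|⃗y|, ⃗y)) dt`, and
`F p := ∫₀¹ f(t • p) dt` is `C^k` near the vertex by differentiation under the integral sign.
To apply the latter globally, `f` is first replaced by a `C^k` function on all of `ℝ^{n+1}`
that agrees with it on a ball around the vertex.
-/

open MeasureTheory Metric Set Bornology
open scoped Convolution

theorem contDiff_parametric_integral_of_contDiff {P G E : Type*}
    [NormedAddCommGroup P] [NormedSpace ℝ P] [NormedAddCommGroup G] [NormedSpace ℝ G]
    [FiniteDimensional ℝ G] [MeasurableSpace G] [BorelSpace G] {μ : Measure G} [SFinite μ]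
    [μ.IsAddLeftInvariant] [IsFiniteMeasureOnCompacts μ] [NormedAddCommGroup E]
    [NormedSpace ℝ E] {n : ℕ∞} {g : P → G → E} (hg : ContDiff ℝ n ↿g) {K : Set G}
    (hK : IsBounded K) (hKm : MeasurableSet K) :
    ContDiff ℝ n fun p => ∫ t in K, g p t ∂μ := by
  obtain ⟨R, hR, hKR⟩ := hK.subset_closedBall_lt 0 0
  -- After a cutoff `χ` equal to `1` on `K`, the integral is a convolution with `1_K`,
  -- whose smoothness in a parameter is known.
  let χ : ContDiffBump (0 : G) := ⟨R, R + 1, hR, by linarith⟩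
  have hconv : ∀ p, ∫ t in K, g p t ∂μ =
      (K.indicator (fun _ => (1 : ℝ)) ⋆[ContinuousLinearMap.lsmul ℝ ℝ, μ]
        fun t => χ (-t) • g p (-t)) 0 := by
    intro p
    rw [convolution_def, ← integral_indicator hKm]
    congr 1 with t
    by_cases ht : t ∈ K
    · simp [ht, χ.one_of_mem_closedBall (by simpa using hKR ht)]
    · simp [ht]
  simp_rw [hconv, ← contDiffOn_univ]
  refine contDiffOn_convolution_right_with_param_comp _ contDiffOn_const isOpen_univ
    (isCompact_closedBall (0 : G) (R + 1)) (fun p t _ ht => ?_) ?_ ?_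
  · rw [mem_closedBall_zero_iff, not_le] at ht
    rw [χ.zero_of_le_dist (by simpa using ht.le), zero_smul]
  · exact ((integrableOn_const (hK.measure_lt_top (μ := μ)).ne).integrable_indicator
      hKm).locallyIntegrable
  · exact ((χ.contDiff.comp contDiff_snd.neg).smul
      (hg.comp (contDiff_fst.prodMk contDiff_snd.neg))).contDiffOn

theorem ContDiffOn.exists_contDiff_eqOn_closedBall {E F : Type*} [NormedAddCommGroup E]
    [NormedSpace ℝ E] [HasContDiffBump E] [NormedAddCommGroup F] [NormedSpace ℝ F] {n : ℕ∞}
    {f : E → F} {U : Set E} {x : E} (hf : ContDiffOn ℝ n f U) (hU : IsOpen U) (hx : x ∈ U) :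
    ∃ δ > 0, ∃ h : E → F, ContDiff ℝ n h ∧ EqOn h f (closedBall x δ) := by
  obtain ⟨η, hη, hball⟩ := isOpen_iff.1 hU x hx
  let φ : ContDiffBump x := ⟨η / 3, η / 2, by positivity, by linarith⟩
  refine ⟨η / 3, by positivity, fun y => φ y • f y, ?_, fun y hy => ?_⟩
  · refine contDiff_iff_contDiffAt.2 fun y => ?_
    by_cases hy : y ∈ tsupport φ
    · have hyU : y ∈ U := hball <| closedBall_subset_ball (by linarith : η / 2 < η)
        (φ.tsupport_eq ▸ hy)
      exact φ.contDiff.contDiffAt.smul (hf.contDiffAt (hU.mem_nhds hyU))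
    · refine (contDiffAt_const (c := (0 : F))).congr_of_eventuallyEq ?_
      filter_upwards [notMem_tsupport_iff_eventuallyEq.1 hy] with z hz
      simp [hz]
  · simp [φ.one_of_mem_closedBall hy]

theorem contDiff_parametric_intervalIntegral_of_contDiff {P E : Type*}
    [NormedAddCommGroup P] [NormedSpace ℝ P] [NormedAddCommGroup E] [NormedSpace ℝ E]
    {μ : Measure ℝ} [SFinite μ] [μ.IsAddLeftInvariant] [IsFiniteMeasureOnCompacts μ]
    {n : ℕ∞} {g : P → ℝ → E} (hg : ContDiff ℝ n ↿g) (a b : ℝ) :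
    ContDiff ℝ n fun p => ∫ t in a..b, g p t ∂μ :=
  (contDiff_parametric_integral_of_contDiff hg (isBounded_Ioc a b) measurableSet_Ioc).sub
    (contDiff_parametric_integral_of_contDiff hg (isBounded_Ioc b a) measurableSet_Ioc)

theorem intervalIntegral_comp_smul_mk {E F : Type*} [NormedAddCommGroup E] [NormedSpace ℝ E]
    [NormedAddCommGroup F] [NormedSpace ℝ F] (f : ℝ × E → F) {r : ℝ} (hr : r ≠ 0) (y : E) :
    ∫ t in (0 : ℝ)..1, f (t • (r, y)) = r⁻¹ • ∫ s in (0 : ℝ)..r, f (s, (s / r) • y) := by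
  have := intervalIntegral.integral_comp_mul_right (fun s => f (s, (s / r) • y)) hr
    (a := 0) (b := 1)
  rw [zero_mul, one_mul] at this
  rw [← this]
  congr 1 with t
  simp [mul_div_cancel_right₀ _ hr]

theorem cone_radial_average_coneSmooth_general (n : ℕ) (k : ℕ∞)
    (f : ℝ × EuclideanSpace ℝ (Fin n) → ℝ)
    (U : Set (ℝ × EuclideanSpace ℝ (Fin n))) (hU : IsOpen U) (h0U : (0, 0) ∈ U)
    (hf : ContDiffOn ℝ k f U) :
    ∃ ε > (0 : ℝ), ∃ F : ℝ × EuclideanSpace ℝ (Fin n) → ℝ,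
      ∃ V : Set (ℝ × EuclideanSpace ℝ (Fin n)),
        IsOpen V ∧ (0, 0) ∈ V ∧ ContDiffOn ℝ k F V ∧
        ∀ y : EuclideanSpace ℝ (Fin n), 0 < ‖y‖ → ‖y‖ < ε →
          F (‖y‖, y) = ‖y‖⁻¹ * ∫ s in (0 : ℝ)..‖y‖, f (s, (s / ‖y‖) • y) := by
  obtain ⟨δ, hδ, h, hh, hhf⟩ := hf.exists_contDiff_eqOn_closedBall hU h0U
  have hF : ContDiff ℝ k fun p => ∫ t in (0 : ℝ)..1, h (t • p) :=
    contDiff_parametric_intervalIntegral_of_contDiff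
      (hh.comp (contDiff_snd.smul contDiff_fst)) 0 1
  refine ⟨δ, hδ, _, univ, isOpen_univ, mem_univ _, hF.contDiffOn, fun y hy hyδ => ?_⟩
  have hsegment : ∀ t ∈ uIcc (0 : ℝ) 1, t • (‖y‖, y) ∈ closedBall (0, 0) δ := by
    intro t ht
    rw [uIcc_of_le zero_le_one] at ht
    rw [← Prod.zero_eq_mk, mem_closedBall_zero_iff, norm_smul, Prod.norm_mk, norm_norm,
      max_self]
    exact (mul_le_of_le_one_left (norm_nonneg y) ((Real.norm_of_nonneg ht.1).trans_le ht.2)).trans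
      hyδ.le
  calc ∫ t in (0 : ℝ)..1, h (t • (‖y‖, y))
      = ∫ t in (0 : ℝ)..1, f (t • (‖y‖, y)) :=
        intervalIntegral.integral_congr fun t ht => hhf (hsegment t ht)
    _ = _ := intervalIntegral_comp_smul_mk f hy.ne' y

/-- let `f : ℝ^{n+1} = ℝ × ℝ^n → ℝ` be `C^k` near `0` (`k ∈ ℕ ∪ {∞}`). Then
the radial average on the light-cone `⃗y ↦ |⃗y|⁻¹ ∫₀^{|⃗y|} f(s, s⃗y/|⃗y|) ds` is
`C^k`-cone differentiable: it agrees, near the vertex, with the cone-restriction of a `C^k`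
function `F` on ℝ^{n+1}. -/
theorem cone_radial_average_coneSmooth (n : ℕ) (hn : 1 ≤ n) (k : ℕ∞)
    (f : ℝ × EuclideanSpace ℝ (Fin n) → ℝ)
    (U : Set (ℝ × EuclideanSpace ℝ (Fin n))) (hU : IsOpen U) (h0U : (0, 0) ∈ U)
    (hf : ContDiffOn ℝ k f U) :
    ∃ ε > (0 : ℝ), ∃ F : ℝ × EuclideanSpace ℝ (Fin n) → ℝ,
      ∃ V : Set (ℝ × EuclideanSpace ℝ (Fin n)),
        IsOpen V ∧ (0, 0) ∈ V ∧ ContDiffOn ℝ k F V ∧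
        ∀ y : EuclideanSpace ℝ (Fin n), 0 < ‖y‖ → ‖y‖ < ε →
          F (‖y‖, y) = ‖y‖⁻¹ * ∫ s in (0 : ℝ)..‖y‖, f (s, (s / ‖y‖) • y) :=
  cone_radial_average_coneSmooth_general n k f U hU h0U hf
end

section
/- Let k ∈ ℕ, r₀ > 0, and let κ, c : [0, r₀] → ℝ be C^k functions with κ(0) = 0. Suppose y : [0, r₀] → ℝ is C¹ with y(0) = 0 and y′(r) = 1 + κ(r)·y(r) + c(r)·y(r)² for all r ∈ [0, r₀]. Then the function z : [0, r₀] → ℝ defined by z(0) = 1 and z(r) = y(r)/r for r ∈ (0, r₀] is C^k on [0, r₀]. -/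
/-!
Bootstrapping `y' = 1 + κ y + c y²` shows that `y` is `C^(k+1)`, hence `y'` is `C^k`.
Hadamard's formula `y r / r = ∫₀¹ y'(t r) dt` (using `y 0 = 0`) expresses `z` as an average
of `y'`, whose value at `r = 0` is `y' 0 = 1` because `κ 0 = y 0 = 0`. Finally,
`r ↦ ∫₀¹ tʲ w(t r) dt` is `C^n` on `[0, r₀]` whenever `w` is: differentiating under the integral
sign turns `(w, j)` into `(w', j + 1)`, which closes an induction on `n`.
-/

open Set Filter Topology MeasureTheory intervalIntegral

theorem hasDerivWithinAt_Icc_of_hasDerivAt_Ioo {E : Type*} [NormedAddCommGroup E]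
    [NormedSpace ℝ E] {f f' : ℝ → E} {a b x : ℝ} (hab : a < b)
    (hf : ContinuousOn f (Icc a b)) (hf' : ContinuousOn f' (Icc a b))
    (hderiv : ∀ y ∈ Ioo a b, HasDerivAt f (f' y) y) (hx : x ∈ Icc a b) :
    HasDerivWithinAt f (f' x) (Icc a b) x := by
  have hcl : closure (Ioo a b) = Icc a b := closure_Ioo hab.ne
  rw [← hcl]
  refine hasFDerivWithinAt_closure_of_tendsto_fderiv
    (fun y hy => (hderiv y hy).differentiableAt.differentiableWithinAt) (convex_Ioo a b)
    isOpen_Ioo (fun y hy => (hf y (hcl ▸ hy)).mono Ioo_subset_Icc_self) ?_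
  have hlim : Tendsto f' (𝓝[Ioo a b] x) (𝓝 (f' x)) :=
    ((hf' x hx).mono Ioo_subset_Icc_self).tendsto
  refine (ContinuousLinearMap.toSpanSingletonCLE.continuous.tendsto _ |>.comp hlim).congr' ?_
  filter_upwards [self_mem_nhdsWithin] with y hy
  exact (hderiv y hy).hasFDerivAt.fderiv.symm

theorem contDiffOn_succ_of_hasDerivWithinAt {𝕜 E : Type*} [NontriviallyNormedField 𝕜]
    [NormedAddCommGroup E] [NormedSpace 𝕜 E] {s : Set 𝕜} (hs : UniqueDiffOn 𝕜 s)
    {f f' : 𝕜 → E} {n : ℕ} (hf : ∀ x ∈ s, HasDerivWithinAt f (f' x) s x)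
    (hf' : ContDiffOn 𝕜 n f' s) : ContDiffOn 𝕜 (n + 1) f s :=
  (contDiffOn_succ_iff_derivWithin hs).2
    ⟨fun x hx => (hf x hx).differentiableWithinAt, by simp,
      hf'.congr fun x hx => (hf x hx).derivWithin (hs x hx)⟩

theorem contDiffOn_succ_of_riccati {s : Set ℝ} (hs : UniqueDiffOn ℝ s) {κ c y : ℝ → ℝ} (n : ℕ)
    (hκ : ContDiffOn ℝ n κ s) (hc : ContDiffOn ℝ n c s)
    (hode : ∀ r ∈ s, HasDerivWithinAt y (1 + κ r * y r + c r * y r ^ 2) s r) :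
    ContDiffOn ℝ (n + 1) y s := by
  have step (m : ℕ) (hκ : ContDiffOn ℝ m κ s) (hc : ContDiffOn ℝ m c s)
      (hy : ContDiffOn ℝ m y s) : ContDiffOn ℝ (m + 1) y s :=
    contDiffOn_succ_of_hasDerivWithinAt hs hode (by fun_prop)
  induction n with
  | zero => exact step 0 hκ hc (contDiffOn_zero.2 fun r hr => (hode r hr).continuousWithinAt)
  | succ n ih =>
    exact step _ hκ hc (by exact_mod_cast ih (hκ.of_le (by simp)) (hc.of_le (by simp)))

noncomputable def hadamardIntegral (w : ℝ → ℝ) (j : ℕ) (r : ℝ) : ℝ :=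
  ∫ t in (0 : ℝ)..1, t ^ j * w (t * r)

section HadamardIntegral

variable {r₀ r : ℝ} {w : ℝ → ℝ}

theorem mul_mem_Icc_zero_of_mem_Icc_zero_one {t : ℝ} (ht : t ∈ Icc (0 : ℝ) 1)
    (hr : r ∈ Icc 0 r₀) : t * r ∈ Icc 0 r₀ :=
  ⟨mul_nonneg ht.1 hr.1, (mul_le_of_le_one_left hr.1 ht.2).trans hr.2⟩

theorem intervalIntegrable_pow_mul_comp_mul (hw : ContinuousOn w (Icc 0 r₀)) (j : ℕ)
    (hr : r ∈ Icc 0 r₀) : IntervalIntegrable (fun t => t ^ j * w (t * r)) volume 0 1 := by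
  refine ContinuousOn.intervalIntegrable ?_
  rw [uIcc_of_le zero_le_one]
  exact (continuousOn_pow j).mul (hw.comp (continuous_mul_const r).continuousOn
    fun t ht => mul_mem_Icc_zero_of_mem_Icc_zero_one ht hr)

theorem continuousOn_hadamardIntegral (hr₀ : 0 ≤ r₀) (hw : ContinuousOn w (Icc 0 r₀)) (j : ℕ) :
    ContinuousOn (hadamardIntegral w j) (Icc 0 r₀) := by
  set W := IccExtend hr₀ ((Icc 0 r₀).domRestrict w)
  have hW : Continuous W := continuous_IccExtend_iff.2 hw.domRestrict
  have hcont : Continuous (hadamardIntegral W j) :=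
    continuous_parametric_intervalIntegral_of_continuous' (by fun_prop) 0 1
  refine hcont.continuousOn.congr fun r hr => integral_congr fun t ht => ?_
  rw [uIcc_of_le zero_le_one] at ht
  simp [W, IccExtend_of_mem _ _ (mul_mem_Icc_zero_of_mem_Icc_zero_one ht hr)]

theorem hasDerivAt_hadamardIntegral {w' : ℝ → ℝ} (hw : ContinuousOn w (Icc 0 r₀))
    (hw' : ContinuousOn w' (Icc 0 r₀)) (hderiv : ∀ x ∈ Ioo 0 r₀, HasDerivAt w (w' x) x)
    (j : ℕ) (hr : r ∈ Ioo 0 r₀) :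
    HasDerivAt (hadamardIntegral w j) (hadamardIntegral w' (j + 1) r) r := by
  obtain ⟨M, hM⟩ := isCompact_Icc.exists_bound_of_continuousOn hw'
  unfold hadamardIntegral
  have hmem : ∀ t ∈ uIoc (0 : ℝ) 1, ∀ x ∈ Ioo 0 r₀, t * x ∈ Ioo 0 r₀ := fun t ht x hx => by
    rw [uIoc_of_le zero_le_one] at ht
    exact ⟨mul_pos ht.1 hx.1, (mul_le_of_le_one_left hx.1.le ht.2).trans_lt hx.2⟩
  refine (hasDerivAt_integral_of_dominated_loc_of_deriv_le
    (F := fun x t => t ^ j * w (t * x)) (F' := fun x t => t ^ (j + 1) * w' (t * x))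
    (bound := fun _ => M) (isOpen_Ioo.mem_nhds hr) ?_
    (intervalIntegrable_pow_mul_comp_mul hw j (Ioo_subset_Icc_self hr))
    (intervalIntegrable_iff.1 (intervalIntegrable_pow_mul_comp_mul hw' (j + 1)
      (Ioo_subset_Icc_self hr))).aestronglyMeasurable ?_ intervalIntegrable_const ?_).2
  · filter_upwards [isOpen_Ioo.mem_nhds hr] with x hx
    exact (intervalIntegrable_iff.1
      (intervalIntegrable_pow_mul_comp_mul hw j (Ioo_subset_Icc_self hx))).aestronglyMeasurable
  · refine .of_forall fun t ht x hx => ?_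
    have ht' : t ∈ Ioc (0 : ℝ) 1 := by rwa [uIoc_of_le zero_le_one] at ht
    rw [norm_mul, norm_pow, Real.norm_of_nonneg ht'.1.le]
    calc t ^ (j + 1) * ‖w' (t * x)‖ ≤ 1 * M :=
          mul_le_mul (pow_le_one₀ ht'.1.le ht'.2) (hM _ (Ioo_subset_Icc_self (hmem t ht x hx)))
            (norm_nonneg _) zero_le_one
      _ = M := one_mul M
  · refine .of_forall fun t ht x hx => ?_
    have h := ((hderiv _ (hmem t ht x hx)).comp x ((hasDerivAt_id x).const_mul t)).const_mul (t ^ j)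
    exact h.congr_deriv (by ring)

theorem hasDerivWithinAt_hadamardIntegral (hr₀ : 0 < r₀) (hw : ContDiffOn ℝ 1 w (Icc 0 r₀))
    (j : ℕ) (hr : r ∈ Icc 0 r₀) :
    HasDerivWithinAt (hadamardIntegral w j)
      (hadamardIntegral (derivWithin w (Icc 0 r₀)) (j + 1) r) (Icc 0 r₀) r := by
  have hw' : ContinuousOn (derivWithin w (Icc 0 r₀)) (Icc 0 r₀) :=
    hw.continuousOn_derivWithin (uniqueDiffOn_Icc hr₀) le_rfl
  refine hasDerivWithinAt_Icc_of_hasDerivAt_Ioo hr₀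
    (continuousOn_hadamardIntegral hr₀.le hw.continuousOn j)
    (continuousOn_hadamardIntegral hr₀.le hw' (j + 1)) (fun x hx => ?_) hr
  refine hasDerivAt_hadamardIntegral hw.continuousOn hw' (fun x hx => ?_) j hx
  exact ((hw.differentiableOn one_ne_zero x (Ioo_subset_Icc_self hx)).hasDerivWithinAt).hasDerivAt
    (Icc_mem_nhds hx.1 hx.2)

theorem contDiffOn_hadamardIntegral (hr₀ : 0 < r₀) (n : ℕ) (hw : ContDiffOn ℝ n w (Icc 0 r₀))
    (j : ℕ) : ContDiffOn ℝ n (hadamardIntegral w j) (Icc 0 r₀) := by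
  induction n generalizing w j with
  | zero => exact contDiffOn_zero.2 (continuousOn_hadamardIntegral hr₀.le hw.continuousOn j)
  | succ n ih =>
    have hUD := uniqueDiffOn_Icc hr₀
    have hw' : ContDiffOn ℝ n (derivWithin w (Icc 0 r₀)) (Icc 0 r₀) :=
      hw.derivWithin hUD (by push_cast; exact le_rfl)
    exact_mod_cast contDiffOn_succ_of_hasDerivWithinAt hUD
      (fun x hx => hasDerivWithinAt_hadamardIntegral hr₀ (hw.of_le (by simp)) j hx) (ih hw' (j + 1))

theorem hadamardIntegral_zero_eq_div {y y' : ℝ → ℝ}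
    (hy : ∀ x ∈ Icc 0 r₀, HasDerivWithinAt y (y' x) (Icc 0 r₀) x)
    (hy' : ContinuousOn y' (Icc 0 r₀)) (hr : r ∈ Ioc 0 r₀) :
    hadamardIntegral y' 0 r = (y r - y 0) / r := by
  have hsub : Icc 0 r ⊆ Icc 0 r₀ := Icc_subset_Icc le_rfl hr.2
  have hftc : ∫ s in (0 : ℝ)..r, y' s = y r - y 0 := by
    refine integral_eq_sub_of_hasDerivAt_of_le hr.1.le
      (fun x hx => ((hy x (hsub hx)).continuousWithinAt).mono hsub) (fun x hx => ?_)
      ((hy'.mono hsub).intervalIntegrable_of_Icc hr.1.le)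
    exact (hy x (hsub (Ioo_subset_Icc_self hx))).hasDerivAt
      (Icc_mem_nhds hx.1 (hx.2.trans_le hr.2))
  simp only [hadamardIntegral, pow_zero, one_mul]
  rw [integral_comp_mul_right y' hr.1.ne', zero_mul, one_mul, hftc, smul_eq_mul,
    div_eq_inv_mul]

end HadamardIntegral

theorem raychaudhuri_y_div_r_contDiff_general (k : ℕ) (r₀ : ℝ) (hr₀ : 0 < r₀)
    (κ c : ℝ → ℝ)
    (hκ : ContDiffOn ℝ (k : ℕ∞) κ (Icc 0 r₀))
    (hc : ContDiffOn ℝ (k : ℕ∞) c (Icc 0 r₀))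
    (hκ0 : κ 0 = 0)
    (y : ℝ → ℝ)
    (hy0 : y 0 = 0)
    (hode : ∀ r ∈ Icc (0 : ℝ) r₀,
      HasDerivWithinAt y (1 + κ r * y r + c r * y r ^ 2) (Icc 0 r₀) r) :
    ContDiffOn ℝ (k : ℕ∞) (fun r : ℝ => if r = 0 then 1 else y r / r) (Icc 0 r₀) := by
  set y' := fun r => 1 + κ r * y r + c r * y r ^ 2
  have hy : ContDiffOn ℝ k y (Icc 0 r₀) :=
    (contDiffOn_succ_of_riccati (uniqueDiffOn_Icc hr₀) k hκ hc hode).of_le le_self_add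
  have hy' : ContDiffOn ℝ k y' (Icc 0 r₀) := by fun_prop
  refine (contDiffOn_hadamardIntegral hr₀ k hy' 0).congr fun r hr => ?_
  rcases hr.1.eq_or_lt with rfl | hr_pos
  · simp [hadamardIntegral, y', hκ0, hy0]
  · rw [if_neg hr_pos.ne', hadamardIntegral_zero_eq_div hode hy'.continuousOn ⟨hr_pos, hr.2⟩,
      hy0, sub_zero]

/-- regularity of `y/r` for the radial Raychaudhuri-type ODE: if
`κ, c : [0, r₀] → ℝ` are `C^k` with `κ(0) = 0`, and `y` is `C¹` on `[0, r₀]` with `y(0) = 0`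
and `y′ = 1 + κ·y + c·y²`, then the function equal to `y(r)/r` for `r > 0` and to `1` at
`r = 0` is `C^k` on `[0, r₀]`. -/
theorem raychaudhuri_y_div_r_contDiff (k : ℕ) (r₀ : ℝ) (hr₀ : 0 < r₀)
    (κ c : ℝ → ℝ)
    (hκ : ContDiffOn ℝ (k : ℕ∞) κ (Icc 0 r₀))
    (hc : ContDiffOn ℝ (k : ℕ∞) c (Icc 0 r₀))
    (hκ0 : κ 0 = 0)
    (y : ℝ → ℝ)
    (hy : ContDiffOn ℝ 1 y (Icc 0 r₀))
    (hy0 : y 0 = 0)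
    (hode : ∀ r ∈ Icc (0 : ℝ) r₀,
      HasDerivWithinAt y (1 + κ r * y r + c r * y r ^ 2) (Icc 0 r₀) r) :
    ContDiffOn ℝ (k : ℕ∞) (fun r : ℝ => if r = 0 then 1 else y r / r) (Icc 0 r₀) :=
  raychaudhuri_y_div_r_contDiff_general k r₀ hr₀ κ c hκ hc hκ0 y hy0 hode
end
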